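/- arXiv:1103.0991 — 2 statements merged into one kernel-verified Lean document; each statement's English description precedes it below -/
import Mathlib

section
/- (Nonexpansiveness principle.) Let X be a real Hilbert space, let T : X → X be nonexpansive, let (z_n)_{n∈ℕ} be a sequence in X with z_n ⇀ z, and suppose that T z_n ⇀ y. Let C and D be closed affine subspaces of X such that D − D = (C − C)^⊥, and suppose that z_n + T z_n − P_C z_n − P_C(T z_n) → 0 and z_n − T z_n − P_D z_n − P_D(−T z_n) → 0. Then ½z + ½y ∈ C, ½z − ½y ∈ D, and y = T z. -/
/-!
Let u_n = ½ z_n + ½ T z_n and v_n = ½ z_n - ½ T z_n, with weak limits u = ½ z + ½ y and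
v = ½ z - ½ y. The hypotheses say that u_n and v_n are asymptotically in C and D; since affine
subspaces are weakly sequentially closed, u ∈ C and v ∈ D. Because C - C and D - D are orthogonal
and weakly convergent sequences are bounded, ⟪u_n - u, v_n - v⟫ → 0, i.e.
‖z_n - z‖² - ‖T z_n - y‖² → 0. Expanding ‖T z_n - T z‖² ≤ ‖z_n - z‖² around y then leaves
‖y - T z‖² ≤ 2⟪T z_n - y, T z - y⟫ + o(1) → 0.
-/

open Filter Topology RealInnerProductSpace

section

variable {X : Type*} [NormedAddCommGroup X] [InnerProductSpace ℝ X]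

def WeakTendsto (f : ℕ → X) (x : X) : Prop :=
  ∀ w : X, Tendsto (fun n => ⟪f n, w⟫) atTop (𝓝 ⟪x, w⟫)

namespace WeakTendsto

variable {f g : ℕ → X} {x y : X}

theorem add (hf : WeakTendsto f x) (hg : WeakTendsto g y) :
    WeakTendsto (fun n => f n + g n) (x + y) := fun w => by
  simpa only [inner_add_left] using (hf w).add (hg w)

theorem sub (hf : WeakTendsto f x) (hg : WeakTendsto g y) :
    WeakTendsto (fun n => f n - g n) (x - y) := fun w => by
  simpa only [inner_sub_left] using (hf w).sub (hg w)

theorem const_smul (hf : WeakTendsto f x) (c : ℝ) :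
    WeakTendsto (fun n => c • f n) (c • x) := fun w => by
  simpa only [real_inner_smul_left] using (hf w).const_mul c

theorem sub_const (hf : WeakTendsto f x) (y : X) :
    WeakTendsto (fun n => f n - y) (x - y) :=
  hf.sub fun _ => tendsto_const_nhds

theorem tendsto_inner_sub (hf : WeakTendsto f x) (w : X) :
    Tendsto (fun n => ⟪f n - x, w⟫) atTop (𝓝 0) := by
  simpa using hf.sub_const x w

theorem isBoundedUnder_norm [CompleteSpace X] (hf : WeakTendsto f x) :
    IsBoundedUnder (· ≤ ·) atTop fun n => ‖f n‖ := by
  have hpointwise : ∀ w, ∃ M, ∀ n, ‖innerSL ℝ (f n) w‖ ≤ M := fun w => by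
    obtain ⟨M, hM⟩ := (hf w).norm.bddAbove_range
    exact ⟨M, fun n => hM ⟨n, rfl⟩⟩
  obtain ⟨M, hM⟩ := banach_steinhaus hpointwise
  exact isBoundedUnder_of ⟨M, fun n => by simpa [innerSL_apply_norm] using hM n⟩

end WeakTendsto

theorem tendsto_inner_zero_of_tendsto_zero_left {f g : ℕ → X}
    (hf : Tendsto f atTop (𝓝 0)) (hg : IsBoundedUnder (· ≤ ·) atTop fun n => ‖g n‖) :
    Tendsto (fun n => ⟪f n, g n⟫) atTop (𝓝 0) :=
  squeeze_zero_norm (fun n => norm_inner_le_norm (f n) (g n))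
    ((tendsto_zero_iff_norm_tendsto_zero.1 hf).zero_mul_isBoundedUnder_le
      (by simpa only [Function.comp_def, norm_norm] using hg))

theorem tendsto_inner_zero_of_tendsto_zero_right {f g : ℕ → X}
    (hf : IsBoundedUnder (· ≤ ·) atTop fun n => ‖f n‖) (hg : Tendsto g atTop (𝓝 0)) :
    Tendsto (fun n => ⟪f n, g n⟫) atTop (𝓝 0) := by
  simpa only [real_inner_comm] using tendsto_inner_zero_of_tendsto_zero_left hg hf

def IsMetricProjection (s : Set X) (P : X → X) : Prop :=
  ∀ w, P w ∈ s ∧ ∀ v ∈ s, ‖w - P w‖ ≤ ‖w - v‖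

namespace IsMetricProjection

variable {P : X → X}

theorem inner_sub_le_zero {s : Set X} (hs : Convex ℝ s) (hP : IsMetricProjection s P) (w : X)
    {v : X} (hv : v ∈ s) : ⟪w - P w, v - P w⟫ ≤ 0 := by
  have : Nonempty s := ⟨⟨P w, (hP w).1⟩⟩
  have hbdd : BddBelow (Set.range fun c : s => ‖w - c‖) :=
    ⟨0, Set.forall_mem_range.2 fun _ => norm_nonneg _⟩
  have hinf : ‖w - P w‖ = ⨅ c : s, ‖w - c‖ :=
    le_antisymm (le_ciInf fun c => (hP w).2 c c.2) (ciInf_le hbdd ⟨P w, (hP w).1⟩)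
  exact (norm_eq_iInf_iff_real_inner_le_zero hs (hP w).1).1 hinf v hv

variable {C : AffineSubspace ℝ X}

theorem inner_sub_eq_zero (hP : IsMetricProjection C P) (w : X) {d : X}
    (hd : d ∈ C.direction) : ⟪w - P w, d⟫ = 0 := by
  have hmem : ∀ e ∈ C.direction, ⟪w - P w, e⟫ ≤ 0 := fun e he => by
    simpa [vadd_eq_add] using
      inner_sub_le_zero C.convex hP w (AffineSubspace.vadd_mem_of_mem_direction he (hP w).1)
  have hneg := hmem (-d) (C.direction.neg_mem hd)
  rw [inner_neg_right] at hneg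
  linarith [hmem d hd]

theorem mem_of_weakTendsto (hP : IsMetricProjection C P) {f c : ℕ → X} {u : X}
    (hf : WeakTendsto f u) (hc : ∀ n, c n ∈ C) (hfc : Tendsto (fun n => f n - c n) atTop (𝓝 0)) :
    u ∈ C := by
  set q := u - P u
  have hsplit : ∀ n, ‖q‖ ^ 2 = ⟪f n - c n, q⟫ - ⟪f n - u, q⟫ := fun n => by
    have horth : ⟪c n - P u, q⟫ = 0 := by
      rw [real_inner_comm]
      exact hP.inner_sub_eq_zero u (AffineSubspace.vsub_mem_direction (hc n) (hP u).1)
    have hq : q = (f n - c n) - (f n - u) + (c n - P u) := by simp only [q]; abel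
    rw [← real_inner_self_eq_norm_sq]
    nth_rewrite 1 [hq]
    rw [inner_add_left, inner_sub_left, horth, add_zero]
  have hlim : Tendsto (fun n => ⟪f n - c n, q⟫ - ⟪f n - u, q⟫) atTop (𝓝 0) := by
    simpa using (hfc.inner tendsto_const_nhds).sub (hf.tendsto_inner_sub q)
  have hq : ‖q‖ ^ 2 = 0 :=
    tendsto_nhds_unique (tendsto_const_nhds.congr hsplit) (by simpa using hlim)
  have : u = P u := sub_eq_zero.1 (norm_eq_zero.1 (pow_eq_zero_iff two_ne_zero |>.1 hq))
  exact this ▸ (hP u).1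

end IsMetricProjection

theorem tendsto_inner_sub_sub_of_direction_le_orthogonal {C D : AffineSubspace ℝ X}
    (hCD : D.direction ≤ C.directionᗮ) {f g c d : ℕ → X} {u v : X}
    (hu : u ∈ C) (hv : v ∈ D) (hc : ∀ n, c n ∈ C) (hd : ∀ n, d n ∈ D)
    (hfc : Tendsto (fun n => f n - c n) atTop (𝓝 0))
    (hgd : Tendsto (fun n => g n - d n) atTop (𝓝 0))
    (hf : IsBoundedUnder (· ≤ ·) atTop fun n => ‖f n - u‖)
    (hg : IsBoundedUnder (· ≤ ·) atTop fun n => ‖g n - v‖) :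
    Tendsto (fun n => ⟪f n - u, g n - v⟫) atTop (𝓝 0) := by
  have hsplit : ∀ n, ⟪f n - u, g n - v⟫ =
      ⟪f n - c n, g n - v⟫ + ⟪f n - u, g n - d n⟫ - ⟪f n - c n, g n - d n⟫ := fun n => by
    have horth : ⟪c n - u, d n - v⟫ = 0 :=
      Submodule.inner_right_of_mem_orthogonal (C.vsub_mem_direction (hc n) hu)
        (hCD (D.vsub_mem_direction (hd n) hv))
    simp only [inner_sub_left, inner_sub_right] at horth ⊢
    linarith
  have hlim := ((tendsto_inner_zero_of_tendsto_zero_left hfc hg).add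
    (tendsto_inner_zero_of_tendsto_zero_right hf hgd)).sub (hfc.inner hgd)
  simpa only [← hsplit, add_zero, inner_zero_left, sub_zero] using hlim

theorem eq_apply_of_weakTendsto_of_tendsto_norm_sq_sub {T : X → X}
    (hT : ∀ a b, ‖T a - T b‖ ≤ ‖a - b‖) {f : ℕ → X} {y z : X}
    (hTf : WeakTendsto (fun n => T (f n)) y)
    (hgap : Tendsto (fun n => ‖f n - z‖ ^ 2 - ‖T (f n) - y‖ ^ 2) atTop (𝓝 0)) :
    y = T z := by
  have hbound : ∀ n, ‖y - T z‖ ^ 2 ≤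
      (‖f n - z‖ ^ 2 - ‖T (f n) - y‖ ^ 2) - 2 * ⟪T (f n) - y, y - T z⟫ := fun n => by
    have hexp : ‖T (f n) - T z‖ ^ 2 =
        ‖T (f n) - y‖ ^ 2 + 2 * ⟪T (f n) - y, y - T z⟫ + ‖y - T z‖ ^ 2 := by
      rw [← norm_add_sq_real, sub_add_sub_cancel]
    have hsq := pow_le_pow_left₀ (norm_nonneg _) (hT (f n) z) 2
    linarith
  have hlim := hgap.sub ((hTf.tendsto_inner_sub (y - T z)).const_mul 2)
  rw [mul_zero, sub_zero] at hlim
  have hle : ‖y - T z‖ ^ 2 ≤ 0 := ge_of_tendsto' hlim hbound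
  exact sub_eq_zero.1 <| norm_eq_zero.1 <|
    pow_eq_zero_iff two_ne_zero |>.1 (le_antisymm hle (sq_nonneg _))

end

theorem nonexpansiveness_principle_general
    {X : Type*} [NormedAddCommGroup X] [InnerProductSpace ℝ X] [CompleteSpace X]
    (T : X → X)
    (hT : ∀ a b : X, ‖T a - T b‖ ≤ ‖a - b‖)
    (z y : X) (zn : ℕ → X)
    (hzweak : ∀ w : X, Tendsto (fun n => ⟪zn n, w⟫) atTop (𝓝 ⟪z, w⟫))
    (hTweak : ∀ w : X, Tendsto (fun n => ⟪T (zn n), w⟫) atTop (𝓝 ⟪y, w⟫))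
    (C D : AffineSubspace ℝ X)
    (hdir : D.direction = C.directionᗮ)
    (PC PD : X → X)
    (hPC : ∀ w : X, PC w ∈ C ∧ ∀ v ∈ C, ‖w - PC w‖ ≤ ‖w - v‖)
    (hPD : ∀ w : X, PD w ∈ D ∧ ∀ v ∈ D, ‖w - PD w‖ ≤ ‖w - v‖)
    (hCasymp : Tendsto (fun n => zn n + T (zn n) - PC (zn n) - PC (T (zn n))) atTop (𝓝 0))
    (hDasymp : Tendsto (fun n => zn n - T (zn n) - PD (zn n) - PD (-T (zn n))) atTop (𝓝 0)) :
    (1 / 2 : ℝ) • z + (1 / 2 : ℝ) • y ∈ C ∧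
      (1 / 2 : ℝ) • z - (1 / 2 : ℝ) • y ∈ D ∧ y = T z := by
  have hzn : WeakTendsto zn z := hzweak
  have hTzn : WeakTendsto (fun n => T (zn n)) y := hTweak
  have hsum := (hzn.const_smul (1 / 2)).add (hTzn.const_smul (1 / 2))
  have hdiff := (hzn.const_smul (1 / 2)).sub (hTzn.const_smul (1 / 2))
  have hc : ∀ n, (1 / 2 : ℝ) • PC (zn n) + (1 / 2 : ℝ) • PC (T (zn n)) ∈ C := fun n =>
    C.convex (hPC _).1 (hPC _).1 (by norm_num) (by norm_num) (by norm_num)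
  have hd : ∀ n, (1 / 2 : ℝ) • PD (zn n) + (1 / 2 : ℝ) • PD (-T (zn n)) ∈ D := fun n =>
    D.convex (hPD _).1 (hPD _).1 (by norm_num) (by norm_num) (by norm_num)
  have hfc : Tendsto (fun n => ((1 / 2 : ℝ) • zn n + (1 / 2 : ℝ) • T (zn n)) -
      ((1 / 2 : ℝ) • PC (zn n) + (1 / 2 : ℝ) • PC (T (zn n)))) atTop (𝓝 0) := by
    simpa only [smul_zero] using (hCasymp.const_smul (1 / 2 : ℝ)).congr fun n => by module
  have hgd : Tendsto (fun n => ((1 / 2 : ℝ) • zn n - (1 / 2 : ℝ) • T (zn n)) -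
      ((1 / 2 : ℝ) • PD (zn n) + (1 / 2 : ℝ) • PD (-T (zn n)))) atTop (𝓝 0) := by
    simpa only [smul_zero] using (hDasymp.const_smul (1 / 2 : ℝ)).congr fun n => by module
  have hu := IsMetricProjection.mem_of_weakTendsto hPC hsum hc hfc
  have hv := IsMetricProjection.mem_of_weakTendsto hPD hdiff hd hgd
  refine ⟨hu, hv, eq_apply_of_weakTendsto_of_tendsto_norm_sq_sub hT hTzn ?_⟩
  have hkey := (tendsto_inner_sub_sub_of_direction_le_orthogonal hdir.le hu hv hc hd hfc hgd
    (hsum.sub_const _).isBoundedUnder_norm (hdiff.sub_const _).isBoundedUnder_norm).const_mul 4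
  rw [mul_zero] at hkey
  refine hkey.congr fun n => ?_
  rw [← real_inner_self_eq_norm_sq, ← real_inner_self_eq_norm_sq]
  simp only [inner_add_left, inner_sub_left, inner_sub_right, real_inner_smul_right,
    real_inner_comm]
  ring

theorem nonexpansiveness_principle
    {X : Type*} [NormedAddCommGroup X] [InnerProductSpace ℝ X] [CompleteSpace X]
    (T : X → X)
    (hT : ∀ a b : X, ‖T a - T b‖ ≤ ‖a - b‖)
    (z y : X) (zn : ℕ → X)
    (hzweak : ∀ w : X, Tendsto (fun n => ⟪zn n, w⟫) atTop (𝓝 ⟪z, w⟫))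
    (hTweak : ∀ w : X, Tendsto (fun n => ⟪T (zn n), w⟫) atTop (𝓝 ⟪y, w⟫))
    (C D : AffineSubspace ℝ X)
    (hCne : (C : Set X).Nonempty) (hDne : (D : Set X).Nonempty)
    (hCcl : IsClosed (C : Set X)) (hDcl : IsClosed (D : Set X))
    (hdir : D.direction = C.directionᗮ)
    (PC PD : X → X)
    (hPC : ∀ w : X, PC w ∈ C ∧ ∀ v ∈ C, ‖w - PC w‖ ≤ ‖w - v‖)
    (hPD : ∀ w : X, PD w ∈ D ∧ ∀ v ∈ D, ‖w - PD w‖ ≤ ‖w - v‖)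
    (hCasymp : Tendsto (fun n => zn n + T (zn n) - PC (zn n) - PC (T (zn n))) atTop (𝓝 0))
    (hDasymp : Tendsto (fun n => zn n - T (zn n) - PD (zn n) - PD (-T (zn n))) atTop (𝓝 0)) :
    (1 / 2 : ℝ) • z + (1 / 2 : ℝ) • y ∈ C ∧
      (1 / 2 : ℝ) • z - (1 / 2 : ℝ) • y ∈ D ∧ y = T z :=
  nonexpansiveness_principle_general T hT z y zn hzweak hTweak C D hdir PC PD hPC hPD hCasymp
    hDasymp
end

section
/- (Svaiter's weak convergence of Douglas–Rachford, shadow sequence.) Let X be a real Hilbert space, let A and B be maximally monotone operators on X with zer(A + B) ≠ ∅, and set T = J_B ∘ (2J_A − Id) + (Id − J_A). Let z_0 ∈ X and define z_{n+1} = T z_n for all n ∈ ℕ. Then (z_n)_{n∈ℕ} converges weakly to a point z ∈ Fix T, and the sequence (J_A z_n)_{n∈ℕ} converges weakly to J_A z, which belongs to zer(A + B). -/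
/-!
The Douglas–Rachford operator `T` is firmly nonexpansive, because
`⟪T a - T b, a - b⟫ - ‖T a - T b‖²` is the sum of the corresponding quantities for the two
resolvents, and `x + u` is a fixed point of `T` whenever `(x, u) ∈ A` and `(x, -u) ∈ B`.
Hence `(z n)` is Fejér monotone with respect to `Fix T` and `z n - T (z n) → 0`, so by
demiclosedness and Opial's lemma it converges weakly to a fixed point `z`.

For the shadow sequence write `x n = J_A (z n)` and `u n = z n - x n`. Pairing the graphs at
`(x n, u n)` and at the solution `(J_A z, z - J_A z)` shows that the monotonicity gap
`⟪x n - J_A z, u n - (z - J_A z)⟫` tends to `0`. If `c` is a weak cluster point of `(x n)`, this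
pins down the limit of `⟪x n, u n⟫`; maximality of `B` then puts `(c, c - z)` into `B`, and
monotonicity of `B` along the sequence forces `c = J_A z`.

Weak cluster points are taken along ultrafilters, along which every bounded sequence has a weak
limit.
-/

open Filter Topology RealInnerProductSpace

/-- A subset of `X × X`, viewed as the graph of a set-valued operator, is monotone. -/
def MonotoneGraph {X : Type*} [NormedAddCommGroup X] [InnerProductSpace ℝ X]
    (A : Set (X × X)) : Prop :=
  ∀ p ∈ A, ∀ q ∈ A, (0 : ℝ) ≤ ⟪p.1 - q.1, p.2 - q.2⟫

/-- A monotone graph is maximally monotone if it is not properly contained in the graph of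
another monotone operator. -/
def MaximalMonotoneGraph {X : Type*} [NormedAddCommGroup X] [InnerProductSpace ℝ X]
    (A : Set (X × X)) : Prop :=
  MonotoneGraph A ∧ ∀ B : Set (X × X), MonotoneGraph B → A ⊆ B → B = A

/-- `J` is the resolvent `(A + Id)⁻¹` of the operator with graph `A`: it sends each
point `w` to the unique point `p` with `(p, w - p) ∈ A`. -/
def IsResolventOf {X : Type*} [NormedAddCommGroup X] [InnerProductSpace ℝ X]
    (J : X → X) (A : Set (X × X)) : Prop :=
  ∀ w : X, (J w, w - J w) ∈ A ∧ ∀ p : X, (p, w - p) ∈ A → p = J w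

section

variable {X : Type*} [NormedAddCommGroup X] [InnerProductSpace ℝ X]

def TendstoWeakly {ι : Type*} (u : ι → X) (l : Filter ι) (x : X) : Prop :=
  ∀ w, Tendsto (fun i => ⟪u i, w⟫) l (𝓝 ⟪x, w⟫)

section WeakConvergence

variable {ι : Type*} {u v : ι → X} {l : Filter ι} {x y : X}

theorem Filter.Tendsto.tendstoWeakly (h : Tendsto u l (𝓝 x)) : TendstoWeakly u l x :=
  fun _ => h.inner tendsto_const_nhds

theorem TendstoWeakly.mono {l' : Filter ι} (hu : TendstoWeakly u l x) (h : l' ≤ l) :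
    TendstoWeakly u l' x :=
  fun w => (hu w).mono_left h

theorem TendstoWeakly.sub (hu : TendstoWeakly u l x) (hv : TendstoWeakly v l y) :
    TendstoWeakly (fun i => u i - v i) l (x - y) :=
  fun w => by simpa only [inner_sub_left] using (hu w).sub (hv w)

theorem tendsto_inner_zero_of_norm_le {C : ℝ} (hu : ∀ i, ‖u i‖ ≤ C) (hv : Tendsto v l (𝓝 0)) :
    Tendsto (fun i => ⟪u i, v i⟫) l (𝓝 0) := by
  refine squeeze_zero_norm (fun i => ?_)
    (by simpa using (tendsto_zero_iff_norm_tendsto_zero.1 hv).const_mul C)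
  exact (abs_real_inner_le_norm _ _).trans (mul_le_mul_of_nonneg_right (hu i) (norm_nonneg _))

variable [CompleteSpace X]

/-- Banach–Alaoglu, transported to `X` by the Riesz representation. -/
theorem Ultrafilter.exists_tendstoWeakly (G : Ultrafilter ι) {C : ℝ} (hu : ∀ i, ‖u i‖ ≤ C) :
    ∃ p, TendstoWeakly u G p := by
  let φ : ι → WeakDual ℝ X := fun i => StrongDual.toWeakDual (InnerProductSpace.toDual ℝ X (u i))
  have hφ : ∀ i, φ i ∈ WeakDual.toStrongDual ⁻¹' Metric.closedBall 0 C := fun i => by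
    simpa [φ] using hu i
  obtain ⟨ψ, -, hψ⟩ := (WeakDual.isCompact_closedBall 0 C).ultrafilter_le_nhds (G.map φ)
    (by rw [Ultrafilter.coe_map, le_principal_iff]; exact Filter.mem_map.mpr (Filter.univ_mem' hφ))
  refine ⟨(InnerProductSpace.toDual ℝ X).symm (WeakDual.toStrongDual ψ), fun w => ?_⟩
  rw [InnerProductSpace.toDual_symm_apply]
  exact tendsto_iff_forall_eval_tendsto_topDualPairing.1 hψ w

theorem tendstoWeakly_of_forall_ultrafilter {C : ℝ} (hu : ∀ i, ‖u i‖ ≤ C)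
    (h : ∀ G : Ultrafilter ι, ↑G ≤ l → ∀ p, TendstoWeakly u G p → p = x) :
    TendstoWeakly u l x := by
  intro w
  rw [tendsto_iff_ultrafilter]
  intro G hG
  obtain ⟨p, hp⟩ := G.exists_tendstoWeakly hu
  exact h G hG p hp ▸ hp w

end WeakConvergence

/-- Opial's lemma. -/
theorem exists_tendstoWeakly_of_tendsto_norm_sub [CompleteSpace X] {u : ℕ → X} {F : Set X}
    {C : ℝ} (hu : ∀ n, ‖u n‖ ≤ C)
    (hdist : ∀ f ∈ F, ∃ r, Tendsto (fun n => ‖u n - f‖) atTop (𝓝 r))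
    (hcluster : ∀ G : Ultrafilter ℕ, (G : Filter ℕ) ≤ atTop → ∀ p, TendstoWeakly u G p → p ∈ F) :
    ∃ x ∈ F, TendstoWeakly u atTop x := by
  obtain ⟨G₀, hG₀⟩ := Ultrafilter.exists_le (atTop : Filter ℕ)
  obtain ⟨x, hx⟩ := G₀.exists_tendstoWeakly hu
  have hxF := hcluster G₀ hG₀ x hx
  refine ⟨x, hxF, tendstoWeakly_of_forall_ultrafilter hu fun G hG p hp => ?_⟩
  obtain ⟨r, hr⟩ := hdist x hxF
  obtain ⟨s, hs⟩ := hdist p (hcluster G hG p hp)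
  -- polarization: `⟪u n, p - x⟫` converges along `atTop`, so its limits along `G` and `G₀` agree
  have hconv : Tendsto (fun n => ⟪u n, p - x⟫) atTop
      (𝓝 ((r ^ 2 - s ^ 2 - ‖x‖ ^ 2 + ‖p‖ ^ 2) / 2)) := by
    refine ((((hr.pow 2).sub (hs.pow 2)).sub_const _).add_const _).div_const 2 |>.congr fun n => ?_
    rw [norm_sub_sq_real, norm_sub_sq_real, inner_sub_right]
    ring
  have hself : ⟪p - x, p - x⟫ = 0 := by
    rw [inner_sub_left, tendsto_nhds_unique (hp (p - x)) (hconv.mono_left hG),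
      tendsto_nhds_unique (hx (p - x)) (hconv.mono_left hG₀), sub_self]
  exact sub_eq_zero.1 (inner_self_eq_zero.1 hself)

def FirmlyNonexpansive (T : X → X) : Prop :=
  ∀ a b, ‖T a - T b‖ ^ 2 ≤ ⟪T a - T b, a - b⟫

namespace FirmlyNonexpansive

variable {T : X → X}

theorem norm_sq_add_norm_sq_le (hT : FirmlyNonexpansive T) (a b : X) :
    ‖T a - T b‖ ^ 2 + ‖(a - T a) - (b - T b)‖ ^ 2 ≤ ‖a - b‖ ^ 2 := by
  have h := hT a b
  rw [show (a - T a) - (b - T b) = (a - b) - (T a - T b) by abel,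
    norm_sub_sq_real (a - b), real_inner_comm]
  linarith

theorem lipschitzWith (hT : FirmlyNonexpansive T) : LipschitzWith 1 T :=
  LipschitzWith.of_dist_le_mul fun a b => by
    rw [dist_eq_norm, dist_eq_norm, NNReal.coe_one, one_mul,
      ← sq_le_sq₀ (norm_nonneg _) (norm_nonneg _)]
    linarith [hT.norm_sq_add_norm_sq_le a b, sq_nonneg ‖(a - T a) - (b - T b)‖]

end FirmlyNonexpansive

theorem IsResolventOf.apply_eq {J : X → X} {A : Set (X × X)} (hJ : IsResolventOf J A) {w p : X}
    (h : (p, w - p) ∈ A) : J w = p :=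
  ((hJ w).2 p h).symm

theorem IsResolventOf.firmlyNonexpansive {J : X → X} {A : Set (X × X)} (hJ : IsResolventOf J A)
    (hA : MonotoneGraph A) : FirmlyNonexpansive J := fun a b => by
  have h := hA _ (hJ a).1 _ (hJ b).1
  rw [show (a - J a) - (b - J b) = (a - b) - (J a - J b) by abel, inner_sub_right,
    real_inner_self_eq_norm_sq] at h
  linarith

section Fejer

variable {E : Type*} [SeminormedAddCommGroup E] {T : E → E} {z : ℕ → E} {f : E}

theorem antitone_norm_sub_of_isFixedPt (hT : LipschitzWith 1 T) (hf : Function.IsFixedPt T f)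
    (hz : ∀ n, z (n + 1) = T (z n)) : Antitone fun n => ‖z n - f‖ :=
  antitone_nat_of_succ_le fun n =>
    calc ‖z (n + 1) - f‖ = ‖T (z n) - T f‖ := by rw [hz n, hf]
      _ ≤ ‖z n - f‖ := by simpa using hT.norm_sub_le (z n) f

theorem tendsto_norm_sub_of_isFixedPt (hT : LipschitzWith 1 T) (hf : Function.IsFixedPt T f)
    (hz : ∀ n, z (n + 1) = T (z n)) :
    Tendsto (fun n => ‖z n - f‖) atTop (𝓝 (⨅ n, ‖z n - f‖)) :=
  tendsto_atTop_ciInf (antitone_norm_sub_of_isFixedPt hT hf hz)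
    ⟨0, by rintro _ ⟨n, rfl⟩; positivity⟩

theorem norm_le_of_isFixedPt (hT : LipschitzWith 1 T) (hf : Function.IsFixedPt T f)
    (hz : ∀ n, z (n + 1) = T (z n)) (n : ℕ) : ‖z n‖ ≤ ‖z 0 - f‖ + ‖f‖ := by
  have := antitone_norm_sub_of_isFixedPt hT hf hz (Nat.zero_le n)
  linarith [norm_sub_norm_le (z n) f]

end Fejer

section Iteration

variable {T : X → X} {z : ℕ → X} {f : X}

/-- Demiclosedness of `Id - T` at `0`. -/
theorem LipschitzWith.isFixedPt_of_tendstoWeakly {ι : Type*} {l : Filter ι} [l.NeBot]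
    (hT : LipschitzWith 1 T) {u : ι → X} {p : X} {C : ℝ} (hu : ∀ i, ‖u i‖ ≤ C)
    (hreg : Tendsto (fun i => u i - T (u i)) l (𝓝 0)) (hp : TendstoWeakly u l p) :
    Function.IsFixedPt T p := by
  set w := p - T p
  have hle : ∀ i, 2 * ⟪u i - p, w⟫ + ‖w‖ ^ 2
      ≤ ‖u i - T (u i)‖ * (‖u i - T (u i)‖ + 2 * (C + ‖p‖)) := fun i => by
    have h₁ : ‖u i - T p‖ ≤ ‖u i - T (u i)‖ + ‖u i - p‖ :=
      calc ‖u i - T p‖ = ‖(u i - T (u i)) + (T (u i) - T p)‖ := by rw [sub_add_sub_cancel]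
        _ ≤ ‖u i - T (u i)‖ + ‖u i - p‖ :=
          (norm_add_le _ _).trans (add_le_add le_rfl (by simpa using hT.norm_sub_le (u i) p))
    have h₂ : ‖u i - T p‖ ^ 2 = ‖u i - p‖ ^ 2 + 2 * ⟪u i - p, w⟫ + ‖w‖ ^ 2 := by
      rw [← norm_add_sq_real, sub_add_sub_cancel]
    have h₃ : ‖u i - p‖ ≤ C + ‖p‖ := (_root_.norm_sub_le _ _).trans (by linarith [hu i])
    nlinarith [mul_le_mul h₁ h₁ (norm_nonneg _) (by positivity),
      mul_le_mul_of_nonneg_left h₃ (norm_nonneg (u i - T (u i)))]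
  have hlhs : Tendsto (fun i => 2 * ⟪u i - p, w⟫ + ‖w‖ ^ 2) l (𝓝 (‖w‖ ^ 2)) := by
    simpa using
      (((hp.sub (tendsto_const_nhds (x := p)).tendstoWeakly) w).const_mul 2).add_const (‖w‖ ^ 2)
  have hrhs :
      Tendsto (fun i => ‖u i - T (u i)‖ * (‖u i - T (u i)‖ + 2 * (C + ‖p‖))) l (𝓝 0) := by
    have he := tendsto_zero_iff_norm_tendsto_zero.1 hreg
    simpa using he.mul (he.add_const (2 * (C + ‖p‖)))
  have hw : ‖w‖ ^ 2 ≤ 0 := le_of_tendsto_of_tendsto' hlhs hrhs hle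
  have : w = 0 := by simpa using le_antisymm hw (sq_nonneg _)
  exact (sub_eq_zero.1 this).symm

namespace FirmlyNonexpansive

theorem tendsto_sub_apply (hT : FirmlyNonexpansive T) (hf : Function.IsFixedPt T f)
    (hz : ∀ n, z (n + 1) = T (z n)) : Tendsto (fun n => z n - T (z n)) atTop (𝓝 0) := by
  have hd := tendsto_norm_sub_of_isFixedPt hT.lipschitzWith hf hz
  have hgap : Tendsto (fun n => ‖z n - f‖ ^ 2 - ‖z (n + 1) - f‖ ^ 2) atTop (𝓝 0) := by
    simpa using (hd.pow 2).sub ((hd.comp (tendsto_add_atTop_nat 1)).pow 2)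
  have hle : ∀ n, ‖z n - T (z n)‖ ^ 2 ≤ ‖z n - f‖ ^ 2 - ‖z (n + 1) - f‖ ^ 2 := fun n => by
    have := hT.norm_sq_add_norm_sq_le (z n) f
    rw [hf, sub_self, sub_zero, ← hz n] at this
    rw [← hz n]
    linarith
  rw [tendsto_zero_iff_norm_tendsto_zero]
  simpa using (squeeze_zero (fun _ => sq_nonneg _) hle hgap).sqrt

theorem exists_tendstoWeakly_iterate [CompleteSpace X] (hT : FirmlyNonexpansive T)
    (hf : Function.IsFixedPt T f) (hz : ∀ n, z (n + 1) = T (z n)) :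
    ∃ x, Function.IsFixedPt T x ∧ TendstoWeakly z atTop x :=
  exists_tendstoWeakly_of_tendsto_norm_sub (norm_le_of_isFixedPt hT.lipschitzWith hf hz)
    (fun _ hg => ⟨_, tendsto_norm_sub_of_isFixedPt hT.lipschitzWith hg hz⟩)
    fun _ hG _ hp => hT.lipschitzWith.isFixedPt_of_tendstoWeakly
      (norm_le_of_isFixedPt hT.lipschitzWith hf hz) ((hT.tendsto_sub_apply hf hz).mono_left hG) hp

end FirmlyNonexpansive

end Iteration

section MonotoneGraph

variable {M : Set (X × X)} {ι : Type*} {l : Filter ι} [l.NeBot] {a b : ι → X} {x y : X} {s : ℝ}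

theorem MonotoneGraph.le_of_tendstoWeakly (hM : MonotoneGraph M) (hab : ∀ i, (a i, b i) ∈ M)
    (ha : TendstoWeakly a l x) (hb : TendstoWeakly b l y)
    (hs : Tendsto (fun i => ⟪a i, b i⟫) l (𝓝 s)) {q : X × X} (hq : q ∈ M) :
    ⟪x, q.2⟫ + ⟪q.1, y⟫ - ⟪q.1, q.2⟫ ≤ s := by
  have hlim : Tendsto (fun i => ⟪a i - q.1, b i - q.2⟫) l
      (𝓝 (s - ⟪x, q.2⟫ - ⟪y, q.1⟫ + ⟪q.1, q.2⟫)) := by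
    refine (((hs.sub (ha q.2)).sub (hb q.1)).add_const _).congr fun i => ?_
    simp only [inner_sub_left, inner_sub_right, real_inner_comm (b i) q.1]
    ring
  have := ge_of_tendsto' hlim fun i => hM _ (hab i) _ hq
  rw [real_inner_comm q.1 y] at this
  linarith

theorem MaximalMonotoneGraph.mem_of_forall_inner_nonneg (hM : MaximalMonotoneGraph M)
    {p : X × X} (h : ∀ q ∈ M, 0 ≤ ⟪p.1 - q.1, p.2 - q.2⟫) : p ∈ M := by
  have hmono : MonotoneGraph (insert p M) := by
    rintro q (rfl | hq) r (rfl | hr)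
    · simp
    · exact h r hr
    · rw [← inner_neg_neg, neg_sub, neg_sub]
      exact h q hq
    · exact hM.1 q hq r hr
  exact hM.2 _ hmono (Set.subset_insert p M) ▸ Set.mem_insert p M

theorem MaximalMonotoneGraph.mem_of_tendstoWeakly (hM : MaximalMonotoneGraph M)
    (hab : ∀ i, (a i, b i) ∈ M) (ha : TendstoWeakly a l x) (hb : TendstoWeakly b l y)
    (hs : Tendsto (fun i => ⟪a i, b i⟫) l (𝓝 s)) (hsle : s ≤ ⟪x, y⟫) : (x, y) ∈ M :=
  hM.mem_of_forall_inner_nonneg fun q hq => by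
    have := hM.1.le_of_tendstoWeakly hab ha hb hs hq
    simp only [inner_sub_left, inner_sub_right]
    linarith

end MonotoneGraph

section ShadowLimit

variable {A B : Set (X × X)} {ι : Type*} {l : Filter ι} {x u e : ι → X} {xl ul : X} {Cx Cu : ℝ}

theorem tendsto_inner_sub_zero_of_monotoneGraph (hA : MonotoneGraph A) (hB : MonotoneGraph B)
    (hxuA : ∀ i, (x i, u i) ∈ A) (hxuB : ∀ i, (x i - e i, e i - u i) ∈ B)
    (hlA : (xl, ul) ∈ A) (hlB : (xl, -ul) ∈ B)
    (hx : ∀ i, ‖x i‖ ≤ Cx) (hu : ∀ i, ‖u i‖ ≤ Cu) (he : Tendsto e l (𝓝 0)) :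
    Tendsto (fun i => ⟪x i - xl, u i - ul⟫) l (𝓝 0) := by
  have hle : ∀ i, ⟪x i - xl, u i - ul⟫ ≤ ⟪x i - xl, e i⟫ + ⟪u i - ul, e i⟫ := fun i => by
    have hmono := hB _ (hxuB i) _ hlB
    have hexpand : ⟪x i - e i - xl, e i - u i - -ul⟫
        = ⟪x i - xl, e i⟫ + ⟪u i - ul, e i⟫ - ⟪x i - xl, u i - ul⟫ - ‖e i‖ ^ 2 := by
      rw [show x i - e i - xl = (x i - xl) - e i by abel,
        show e i - u i - -ul = e i - (u i - ul) by abel]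
      simp only [inner_sub_left, inner_sub_right, real_inner_self_eq_norm_sq,
        real_inner_comm (e i)]
      ring
    simp only at hmono
    nlinarith [sq_nonneg ‖e i‖]
  have hbound : Tendsto (fun i => ⟪x i - xl, e i⟫ + ⟪u i - ul, e i⟫) l (𝓝 0) := by
    simpa using (tendsto_inner_zero_of_norm_le (C := Cx + ‖xl‖)
      (fun i => (norm_sub_le _ _).trans (by linarith [hx i])) he).add
      (tendsto_inner_zero_of_norm_le (C := Cu + ‖ul‖)
        (fun i => (norm_sub_le _ _).trans (by linarith [hu i])) he)
  exact squeeze_zero (fun i => hA _ (hxuA i) _ hlA) hle hbound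

theorem MaximalMonotoneGraph.eq_of_tendstoWeakly_of_tendsto_inner [l.NeBot] {c : X}
    (hB : MaximalMonotoneGraph B) (hxuB : ∀ i, (x i - e i, e i - u i) ∈ B)
    (hx : ∀ i, ‖x i‖ ≤ Cx) (hu : ∀ i, ‖u i‖ ≤ Cu) (he : Tendsto e l (𝓝 0))
    (hα : Tendsto (fun i => ⟪x i - xl, u i - ul⟫) l (𝓝 0))
    (hxc : TendstoWeakly x l c) (hsum : TendstoWeakly (fun i => x i + u i) l (xl + ul)) :
    c = xl := by
  set zl := xl + ul
  have huc : TendstoWeakly u l (zl - c) := fun w => by simpa using (hsum.sub hxc) w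
  have hy : TendstoWeakly (fun i => x i - e i) l c := fun w => by
    simpa using (hxc.sub he.tendstoWeakly) w
  have hv : TendstoWeakly (fun i => e i - u i) l (c - zl) := fun w => by
    simpa using (he.tendstoWeakly.sub huc) w
  set L := ⟪c, ul⟫ + ⟪zl - c, xl⟫ - ⟪xl, ul⟫
  have hxu : Tendsto (fun i => ⟪x i, u i⟫) l (𝓝 L) := by
    convert ((hα.add (hxc ul)).add (huc xl)).sub_const ⟪xl, ul⟫ using 2 with i
    · simp only [inner_sub_left, inner_sub_right, real_inner_comm xl (u i)]
      ring
    · simp [L]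
  have hyv : Tendsto (fun i => ⟪x i - e i, e i - u i⟫) l (𝓝 (-L)) := by
    convert (((tendsto_inner_zero_of_norm_le hx he).sub hxu).sub (he.inner he)).add
      (tendsto_inner_zero_of_norm_le hu he) using 2 with i
    · simp only [inner_sub_left, inner_sub_right, real_inner_comm (e i) (u i)]
      ring
    · simp
  have hgap : -L = ⟪c, c - zl⟫ - ‖c - xl‖ ^ 2 := by
    simp only [L, zl, norm_sub_sq_real, inner_sub_left, inner_sub_right, inner_add_left,
      inner_add_right, real_inner_self_eq_norm_sq, real_inner_comm xl ul]
    ring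
  have hcB : (c, c - zl) ∈ B :=
    hB.mem_of_tendstoWeakly hxuB hy hv hyv (by rw [hgap]; linarith [sq_nonneg ‖c - xl‖])
  have hle := hB.1.le_of_tendstoWeakly hxuB hy hv hyv hcB
  have : ‖c - xl‖ ^ 2 ≤ 0 := by
    simp only at hle
    linarith
  simpa [sub_eq_zero] using le_antisymm this (sq_nonneg _)

end ShadowLimit

def douglasRachford (JA JB : X → X) (w : X) : X :=
  JB ((2 : ℝ) • JA w - w) + (w - JA w)

section DouglasRachford

variable {A B : Set (X × X)} {JA JB : X → X}

theorem FirmlyNonexpansive.douglasRachford (hA : FirmlyNonexpansive JA)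
    (hB : FirmlyNonexpansive JB) : FirmlyNonexpansive (douglasRachford JA JB) := fun a b => by
  have hdefect : ∀ d p q : X, ⟪q + (d - p), d⟫ - ‖q + (d - p)‖ ^ 2
      = (⟪q, (2 : ℝ) • p - d⟫ - ‖q‖ ^ 2) + (⟪p, d⟫ - ‖p‖ ^ 2) := fun d p q => by
    simp only [← real_inner_self_eq_norm_sq, inner_add_left, inner_add_right, inner_sub_left,
      inner_sub_right, real_inner_smul_right, real_inner_comm p q, real_inner_comm p d,
      real_inner_comm q d]
    ring
  have hq := hB ((2 : ℝ) • JA a - a) ((2 : ℝ) • JA b - b)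
  rw [show (2 : ℝ) • JA a - a - ((2 : ℝ) • JA b - b) = (2 : ℝ) • (JA a - JA b) - (a - b) by
    rw [smul_sub]; abel] at hq
  have hsplit : _root_.douglasRachford JA JB a - _root_.douglasRachford JA JB b
      = (JB ((2 : ℝ) • JA a - a) - JB ((2 : ℝ) • JA b - b)) + ((a - b) - (JA a - JA b)) := by
    simp only [_root_.douglasRachford]
    abel
  rw [hsplit]
  linarith [hdefect (a - b) (JA a - JA b) (JB ((2 : ℝ) • JA a - a) - JB ((2 : ℝ) • JA b - b)),
    hA a b]

theorem isFixedPt_douglasRachford (hJA : IsResolventOf JA A) (hJB : IsResolventOf JB B)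
    {x u : X} (hA : (x, u) ∈ A) (hB : (x, -u) ∈ B) :
    Function.IsFixedPt (douglasRachford JA JB) (x + u) := by
  have hJAx : JA (x + u) = x := hJA.apply_eq (by rwa [add_sub_cancel_left])
  have hJBx : JB ((2 : ℝ) • x - (x + u)) = x :=
    hJB.apply_eq (by convert hB using 2; rw [two_smul]; abel)
  simp only [Function.IsFixedPt, douglasRachford, hJAx, hJBx]
  abel

theorem mem_sub_douglasRachford (hJB : IsResolventOf JB B) (w : X) :
    (JA w - (w - douglasRachford JA JB w), (w - douglasRachford JA JB w) - (w - JA w)) ∈ B := by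
  convert (hJB ((2 : ℝ) • JA w - w)).1 using 2 <;> simp only [douglasRachford, two_smul] <;> abel

theorem mem_of_isFixedPt_douglasRachford (hJB : IsResolventOf JB B) {w : X}
    (hw : Function.IsFixedPt (douglasRachford JA JB) w) : (JA w, -(w - JA w)) ∈ B := by
  simpa [hw.eq] using mem_sub_douglasRachford (JA := JA) hJB w

theorem tendstoWeakly_resolvent_douglasRachford [CompleteSpace X] (hA : MonotoneGraph A)
    (hB : MaximalMonotoneGraph B) (hJA : IsResolventOf JA A) (hJB : IsResolventOf JB B)
    {z : ℕ → X} {zl : X} {C : ℝ} (hz : ∀ n, ‖z n‖ ≤ C)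
    (hreg : Tendsto (fun n => z n - douglasRachford JA JB (z n)) atTop (𝓝 0))
    (hfix : Function.IsFixedPt (douglasRachford JA JB) zl) (hlim : TendstoWeakly z atTop zl) :
    TendstoWeakly (fun n => JA (z n)) atTop (JA zl) := by
  have hx : ∀ n, ‖JA (z n)‖ ≤ C + ‖JA 0‖ := fun n => by
    have := (hJA.firmlyNonexpansive hA).lipschitzWith.norm_sub_le (z n) 0
    simp only [NNReal.coe_one, one_mul, sub_zero] at this
    linarith [norm_sub_norm_le (JA (z n)) (JA 0), hz n]
  have hu : ∀ n, ‖z n - JA (z n)‖ ≤ C + (C + ‖JA 0‖) :=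
    fun n => (norm_sub_le _ _).trans (add_le_add (hz n) (hx n))
  have hxuB := fun n => mem_sub_douglasRachford (JA := JA) hJB (z n)
  have hα := tendsto_inner_sub_zero_of_monotoneGraph hA hB.1 (fun n => (hJA (z n)).1) hxuB
    (hJA zl).1 (mem_of_isFixedPt_douglasRachford hJB hfix) hx hu hreg
  refine tendstoWeakly_of_forall_ultrafilter hx fun G hG c hc => ?_
  exact hB.eq_of_tendstoWeakly_of_tendsto_inner hxuB hx hu (hreg.mono_left hG) (hα.mono_left hG) hc
    (by simpa using hlim.mono hG)

end DouglasRachford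

end

theorem douglasRachford_shadow_sequence_weak_convergence
    {X : Type*} [NormedAddCommGroup X] [InnerProductSpace ℝ X] [CompleteSpace X]
    (A B : Set (X × X))
    (hA : MaximalMonotoneGraph A) (hB : MaximalMonotoneGraph B)
    (JA JB : X → X) (hJA : IsResolventOf JA A) (hJB : IsResolventOf JB B)
    (hzer : ∃ x u : X, (x, u) ∈ A ∧ (x, -u) ∈ B)
    (T : X → X) (hT : T = fun w => JB ((2 : ℝ) • JA w - w) + (w - JA w))
    (z : ℕ → X) (hiter : ∀ n, z (n + 1) = T (z n)) :
    ∃ zl : X, T zl = zl ∧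
      (∀ w : X, Tendsto (fun n => ⟪z n, w⟫) atTop (𝓝 ⟪zl, w⟫)) ∧
      (∀ w : X, Tendsto (fun n => ⟪JA (z n), w⟫) atTop (𝓝 ⟪JA zl, w⟫)) ∧
      (∃ u : X, (JA zl, u) ∈ A ∧ (JA zl, -u) ∈ B) := by
  obtain rfl : T = douglasRachford JA JB := hT
  obtain ⟨x₀, u₀, hx₀A, hx₀B⟩ := hzer
  have hfirm := (hJA.firmlyNonexpansive hA.1).douglasRachford (hJB.firmlyNonexpansive hB.1)
  have hfix₀ := isFixedPt_douglasRachford hJA hJB hx₀A hx₀B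
  obtain ⟨zl, hzl, hlim⟩ := hfirm.exists_tendstoWeakly_iterate hfix₀ hiter
  refine ⟨zl, hzl, hlim, ?_, zl - JA zl, (hJA zl).1, mem_of_isFixedPt_douglasRachford hJB hzl⟩
  exact tendstoWeakly_resolvent_douglasRachford hA.1 hB hJA hJB
    (norm_le_of_isFixedPt hfirm.lipschitzWith hfix₀ hiter) (hfirm.tendsto_sub_apply hfix₀ hiter)
    hzl hlim
end
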